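/- arXiv:2412.08767 — 2 statements merged into one kernel-verified Lean document; each statement's English description precedes it below -/
import Mathlib

section
/- Let $\nu \in [0, 1/2]$ and suppose $(j_k)_{k\ge 1}$ is a sequence of positive reals satisfying $(k + \nu/2 - 1/4)\pi \le j_k \le (k + \nu/4 - 1/8)\pi$ for all $k \ge 1$. Let $\kappa > 0$ and set $\lambda_k = \kappa^2 j_k^2$. Then there exist constants $\rho_1, \rho_2 > 0$ such that $\rho_1 |k^2 - m^2| \le |\lambda_k - \lambda_m| \le \rho_2 |k^2 - m^2|$ for all $k, m \ge 1$. -/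
open Real

set_option maxHeartbeats 1000000

/-- Gap condition for eigenvalues, weakly degenerate regime (`ν ∈ [0,1/2]`). -/
theorem eigenvalue_gap_weak (ν : ℝ) (hν₀ : 0 ≤ ν) (hν₁ : ν ≤ 1/2)
    (j : ℕ → ℝ) (hjpos : ∀ k, 1 ≤ k → 0 < j k)
    (hj : ∀ k : ℕ, 1 ≤ k →
      ((k : ℝ) + ν/2 - 1/4) * Real.pi ≤ j k ∧ j k ≤ ((k : ℝ) + ν/4 - 1/8) * Real.pi)
    (κ : ℝ) (hκ : 0 < κ) (lam : ℕ → ℝ) (hlam : ∀ k, lam k = κ^2 * (j k)^2) :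
    ∃ ρ₁ ρ₂ : ℝ, 0 < ρ₁ ∧ 0 < ρ₂ ∧ ∀ k m : ℕ, 1 ≤ k → 1 ≤ m →
      ρ₁ * |(k : ℝ)^2 - (m : ℝ)^2| ≤ |lam k - lam m| ∧
      |lam k - lam m| ≤ ρ₂ * |(k : ℝ)^2 - (m : ℝ)^2| := by
  have hπ := Real.pi_pos
  refine ⟨κ^2 * (21/32) * Real.pi^2, κ^2 * (9/8) * Real.pi^2, by positivity, by positivity, ?_⟩
  have key : ∀ k m : ℕ, 1 ≤ m → m < k →
      κ^2 * (21/32) * Real.pi^2 * ((k:ℝ)^2 - (m:ℝ)^2) ≤ lam k - lam m ∧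
      lam k - lam m ≤ κ^2 * (9/8) * Real.pi^2 * ((k:ℝ)^2 - (m:ℝ)^2) := by
    intro k m hm hmk
    have hk : 1 ≤ k := le_trans hm hmk.le
    obtain ⟨hk1, hk2⟩ := hj k hk
    obtain ⟨hm1, hm2⟩ := hj m hm
    have hkm : (m:ℝ) + 1 ≤ (k:ℝ) := by exact_mod_cast hmk
    have hm1' : (1:ℝ) ≤ (m:ℝ) := by exact_mod_cast hm
    have hνπ : 0 ≤ ν * Real.pi := mul_nonneg hν₀ hπ.le
    have hdiff : (7/8) * ((k:ℝ) - m) * Real.pi ≤ j k - j m := by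
      nlinarith [mul_nonneg (by linarith : (0:ℝ) ≤ (k:ℝ) - m - 1) hπ.le]
    have hdiff' : j k - j m ≤ (9/8) * ((k:ℝ) - m) * Real.pi := by
      nlinarith [mul_nonneg (by linarith : (0:ℝ) ≤ (k:ℝ) - m - 1) hπ.le]
    have hsum : (3/4) * ((k:ℝ) + m) * Real.pi ≤ j k + j m := by
      nlinarith [mul_nonneg (by linarith : (0:ℝ) ≤ (k:ℝ) + m - 2) hπ.le]
    have hsum' : j k + j m ≤ ((k:ℝ) + m) * Real.pi := by
      nlinarith
    have hdnn : (0:ℝ) ≤ j k - j m := by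
      nlinarith [mul_nonneg (by linarith : (0:ℝ) ≤ (k:ℝ) - m) hπ.le]
    have hsnn : (0:ℝ) ≤ (3/4) * ((k:ℝ) + m) * Real.pi := by
      positivity
    have Hlow : ((7/8) * ((k:ℝ) - m) * Real.pi) * ((3/4) * ((k:ℝ) + m) * Real.pi)
        ≤ (j k - j m) * (j k + j m) :=
      mul_le_mul hdiff hsum hsnn hdnn
    have Hhigh : (j k - j m) * (j k + j m)
        ≤ ((9/8) * ((k:ℝ) - m) * Real.pi) * (((k:ℝ) + m) * Real.pi) :=
      mul_le_mul hdiff' hsum' (by nlinarith [hjpos k hk, hjpos m hm])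
        (by nlinarith [mul_nonneg (by linarith : (0:ℝ) ≤ (k:ℝ) - m) hπ.le])
    rw [hlam, hlam]
    constructor
    · nlinarith [mul_le_mul_of_nonneg_left Hlow (sq_nonneg κ)]
    · nlinarith [mul_le_mul_of_nonneg_left Hhigh (sq_nonneg κ)]
  intro k m hk hm
  rcases lt_trichotomy k m with h | h | h
  · obtain ⟨h1, h2⟩ := key m k hk h
    have hkm : (k:ℝ) < (m:ℝ) := by exact_mod_cast h
    have habs1 : |(k:ℝ)^2 - (m:ℝ)^2| = (m:ℝ)^2 - (k:ℝ)^2 := by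
      rw [abs_of_nonpos (by nlinarith)]; ring
    have habs2 : |lam k - lam m| = lam m - lam k := by
      rw [abs_of_nonpos (by nlinarith [mul_pos (mul_pos hκ hκ) hπ])]
      ring
    rw [habs1, habs2]
    constructor <;> nlinarith [mul_pos (mul_pos hκ hκ) hπ]
  · subst h
    simp
  · obtain ⟨h1, h2⟩ := key k m hm h
    have hkm : (m:ℝ) < (k:ℝ) := by exact_mod_cast h
    have habs1 : |(k:ℝ)^2 - (m:ℝ)^2| = (k:ℝ)^2 - (m:ℝ)^2 := by
      rw [abs_of_nonneg (by nlinarith)]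
    have habs2 : |lam k - lam m| = lam k - lam m := by
      rw [abs_of_nonneg (by nlinarith [mul_pos (mul_pos hκ hκ) hπ])]
    rw [habs1, habs2]
    exact ⟨h1, h2⟩
end

section
/- Let $0 \le \alpha_1 < 1$, $\kappa = (2-\alpha_1)/2$, $\nu = (1-\alpha_1)/(2-\alpha_1)$, $j > 0$, and define $\phi(x) = \sqrt{x^{1-\alpha_1}}\, J_\nu(j x^{\kappa})$ for $x \in (0,1]$, where $J_\nu$ is the Bessel function of the first kind. Then $\lim_{x \to 0^+} x^{\alpha_1} \phi'(x) = \frac{(1-\alpha_1)\, j^{\nu}}{2^{\nu}\, \Gamma(\nu+1)}$. -/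
open Real Filter Topology

private noncomputable def bA (ν jz : ℝ) (k : ℕ) : ℝ :=
  (-1 : ℝ) ^ k / ((k.factorial : ℝ) * Real.Gamma ((k : ℝ) + ν + 1)) * (jz / 2) ^ (2 * (k : ℝ) + ν)

private noncomputable def bF (ν jz : ℝ) (t : ℝ) : ℝ := ∑' k : ℕ, bA ν jz k * t ^ k

private noncomputable def bG (ν jz : ℝ) (t : ℝ) : ℝ := ∑' k : ℕ, bA ν jz k * ((k : ℝ) * t ^ (k - 1))

private noncomputable def bU (ν jz : ℝ) (k : ℕ) : ℝ := |bA ν jz k| * k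

private lemma gamma_fact_le {ν : ℝ} (hν : 0 < ν) :
    ∀ k : ℕ, (k.factorial : ℝ) * Real.Gamma (ν + 1) ≤ Real.Gamma ((k : ℝ) + ν + 1) := by
  intro k
  induction k with
  | zero => simp
  | succ n ih =>
    have hG : 0 < Real.Gamma (ν + 1) := Real.Gamma_pos_of_pos (by linarith)
    have hpos : (0 : ℝ) < (n : ℝ) + ν + 1 := by positivity
    have hGn : 0 < Real.Gamma ((n : ℝ) + ν + 1) := Real.Gamma_pos_of_pos hpos
    have h1 : Real.Gamma ((↑(n + 1) : ℝ) + ν + 1)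
        = ((n : ℝ) + ν + 1) * Real.Gamma ((n : ℝ) + ν + 1) := by
      push_cast
      rw [show (n : ℝ) + 1 + ν + 1 = ((n : ℝ) + ν + 1) + 1 by ring, Real.Gamma_add_one hpos.ne']
    have h2 : ((n + 1).factorial : ℝ) = ((n : ℝ) + 1) * (n.factorial : ℝ) := by
      push_cast [Nat.factorial_succ]; ring
    rw [h1, h2]
    have hfn : (0 : ℝ) ≤ (n.factorial : ℝ) * Real.Gamma (ν + 1) := by positivity
    calc ((n : ℝ) + 1) * (n.factorial : ℝ) * Real.Gamma (ν + 1)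
        = ((n : ℝ) + 1) * ((n.factorial : ℝ) * Real.Gamma (ν + 1)) := by ring
      _ ≤ ((n : ℝ) + ν + 1) * ((n.factorial : ℝ) * Real.Gamma (ν + 1)) := by
          apply mul_le_mul_of_nonneg_right _ hfn; linarith
      _ ≤ ((n : ℝ) + ν + 1) * Real.Gamma ((n : ℝ) + ν + 1) :=
          mul_le_mul_of_nonneg_left ih (by positivity)

private lemma bA_abs {ν jz : ℝ} (hν : 0 < ν) (hjz : 0 < jz) (k : ℕ) :
    |bA ν jz k| = ((jz / 2) ^ (2 : ℕ)) ^ k * (jz / 2) ^ ν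
      / ((k.factorial : ℝ) * Real.Gamma ((k : ℝ) + ν + 1)) := by
  have hp : (0 : ℝ) < jz / 2 := by linarith
  have hGn : 0 < Real.Gamma ((k : ℝ) + ν + 1) := Real.Gamma_pos_of_pos (by positivity)
  have hsplit : (jz / 2) ^ (2 * (k : ℝ) + ν) = ((jz / 2) ^ (2 : ℕ)) ^ k * (jz / 2) ^ ν := by
    rw [Real.rpow_add hp, show (2 * (k : ℝ)) = ((2 * k : ℕ) : ℝ) by push_cast; ring,
      Real.rpow_natCast, pow_mul]
  rw [bA, hsplit, abs_mul, abs_div, abs_pow, abs_neg, abs_one, one_pow,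
    abs_of_pos (by positivity), abs_of_pos (by positivity)]
  ring

private lemma bU_summable {ν jz : ℝ} (hν : 0 < ν) (hjz : 0 < jz) :
    Summable (bU ν jz) := by
  have hp : (0 : ℝ) < jz / 2 := by linarith
  have hG : 0 < Real.Gamma (ν + 1) := Real.Gamma_pos_of_pos (by linarith)
  set C : ℝ := (jz / 2) ^ ν / Real.Gamma (ν + 1) with hC
  have hCpos : 0 < C := by positivity
  refine Summable.of_nonneg_of_le (f := fun k => C * (((jz / 2) ^ (2 : ℕ)) ^ k / (k.factorial : ℝ)))
    (fun k => mul_nonneg (abs_nonneg _) (Nat.cast_nonneg k)) ?_ ?_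
  · intro k
    have hGn : 0 < Real.Gamma ((k : ℝ) + ν + 1) := Real.Gamma_pos_of_pos (by positivity)
    have hfk : 0 < (k.factorial : ℝ) := by exact_mod_cast k.factorial_pos
    have hk1 : (k : ℝ) * Real.Gamma (ν + 1) ≤ Real.Gamma ((k : ℝ) + ν + 1) := by
      calc (k : ℝ) * Real.Gamma (ν + 1) ≤ (k.factorial : ℝ) * Real.Gamma (ν + 1) := by
            apply mul_le_mul_of_nonneg_right _ hG.le
            exact_mod_cast k.self_le_factorial
        _ ≤ _ := gamma_fact_le hν k
    have hA : (0 : ℝ) ≤ ((jz / 2) ^ (2 : ℕ)) ^ k * (jz / 2) ^ ν * (k.factorial : ℝ) := by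
      positivity
    rw [bU, bA_abs hν hjz, hC]
    beta_reduce
    rw [div_mul_eq_mul_div, div_mul_div_comm, div_le_div_iff₀ (by positivity) (by positivity)]
    nlinarith [mul_le_mul_of_nonneg_left hk1 hA]
  · exact (Real.summable_pow_div_factorial ((jz / 2) ^ (2 : ℕ))).mul_left C

private lemma bF0_summable (ν jz : ℝ) : Summable (fun k : ℕ => bA ν jz k * (0 : ℝ) ^ k) := by
  apply summable_of_ne_finset_zero (s := {0})
  intro k hk
  have : k ≠ 0 := by simpa using hk
  simp [zero_pow this]

private lemma bderiv_bound {ν jz : ℝ} (hν : 0 < ν) (hjz : 0 < jz) {k : ℕ} {z : ℝ}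
    (hz : z ∈ Set.Ioo (-1 : ℝ) 1) :
    ‖bA ν jz k * ((k : ℝ) * z ^ (k - 1))‖ ≤ bU ν jz k := by
  have hz1 : |z| ≤ 1 := by
    rw [abs_le]; exact ⟨hz.1.le, hz.2.le⟩
  have : |z ^ (k - 1)| ≤ 1 := by
    rw [abs_pow]; exact pow_le_one₀ (abs_nonneg z) hz1
  rw [Real.norm_eq_abs, abs_mul, abs_mul, abs_of_nonneg (Nat.cast_nonneg (α := ℝ) k), bU]
  calc |bA ν jz k| * ((k : ℝ) * |z ^ (k - 1)|)
      ≤ |bA ν jz k| * ((k : ℝ) * 1) := by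
        apply mul_le_mul_of_nonneg_left _ (abs_nonneg _)
        exact mul_le_mul_of_nonneg_left this (Nat.cast_nonneg k)
    _ = |bA ν jz k| * k := by ring

private lemma bF_hasDerivAt {ν jz : ℝ} (hν : 0 < ν) (hjz : 0 < jz) {y : ℝ}
    (hy : y ∈ Set.Ioo (-1 : ℝ) 1) : HasDerivAt (bF ν jz) (bG ν jz y) y := by
  apply hasDerivAt_tsum_of_isPreconnected (bU_summable hν hjz) isOpen_Ioo
    (convex_Ioo _ _).isPreconnected
    (fun k z _ => ((hasDerivAt_pow k z).const_mul (bA ν jz k)))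
    (fun k z hz => bderiv_bound hν hjz hz)
    (Set.mem_Ioo.2 ⟨by norm_num, by norm_num⟩) (bF0_summable ν jz) hy

private lemma bG_bound {ν jz : ℝ} (hν : 0 < ν) (hjz : 0 < jz) {y : ℝ}
    (hy : y ∈ Set.Ioo (-1 : ℝ) 1) : |bG ν jz y| ≤ ∑' k, bU ν jz k := by
  rw [bG, ← Real.norm_eq_abs]
  exact tsum_of_norm_bounded (bU_summable hν hjz).hasSum
    (fun k => bderiv_bound hν hjz hy)

private lemma bF_zero {ν jz : ℝ} : bF ν jz 0 = (jz / 2) ^ ν / Real.Gamma (ν + 1) := by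
  rw [bF, tsum_eq_single 0]
  · rw [bA]
    norm_num
    rw [inv_mul_eq_div]
  · intro k hk
    simp [zero_pow hk]

/-- Boundary observation of the weakly degenerate eigenfunction at the
degenerate endpoint: with `φ(x) = √(x^{1-α₁}) J_ν(j x^κ)`,
`x^{α₁} φ'(x) → (1-α₁) j^ν / (2^ν Γ(ν+1))` as `x → 0⁺`. -/
theorem degenerate_boundary_observation (α₁ : ℝ) (hα₀ : 0 ≤ α₁) (hα₁ : α₁ < 1)
    (κ ν : ℝ) (hκ : κ = (2 - α₁) / 2) (hν : ν = (1 - α₁) / (2 - α₁))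
    (jz : ℝ) (hjz : 0 < jz)
    (J : ℝ → ℝ)
    (hJ : ∀ x : ℝ, 0 < x → J x = ∑' k : ℕ,
      ((-1 : ℝ) ^ k / ((k.factorial : ℝ) * Real.Gamma ((k : ℝ) + ν + 1))) *
        (x / 2) ^ (2 * (k : ℝ) + ν))
    (φ : ℝ → ℝ)
    (hφ : ∀ x : ℝ, 0 < x → φ x = Real.sqrt (x ^ (1 - α₁)) * J (jz * x ^ κ)) :
    Tendsto (fun x => x ^ α₁ * deriv φ x) (nhdsWithin 0 (Set.Ioi 0))
      (nhds ((1 - α₁) * jz ^ ν / (2 ^ ν * Real.Gamma (ν + 1)))) := by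
  have hγpos : (0 : ℝ) < 2 - α₁ := by linarith
  have hβpos : (0 : ℝ) < 1 - α₁ := by linarith
  have hν0 : 0 < ν := by rw [hν]; positivity
  have hp : (0 : ℝ) < jz / 2 := by linarith
  -- representation of φ on (0,∞)
  have hphi : ∀ x : ℝ, 0 < x → φ x = x ^ (1 - α₁) * bF ν jz (x ^ (2 - α₁)) := by
    intro x hx
    have hxκ : 0 < jz * x ^ κ := by positivity
    rw [hφ x hx, hJ _ hxκ, bF, Real.sqrt_eq_rpow, ← tsum_mul_left, ← tsum_mul_left]
    apply tsum_congr
    intro k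
    have e : jz * x ^ κ / 2 = jz / 2 * x ^ κ := by ring
    have h2 : (jz / 2 * x ^ κ) ^ (2 * (k : ℝ) + ν)
        = (jz / 2) ^ (2 * (k : ℝ) + ν) * x ^ (κ * (2 * (k : ℝ) + ν)) := by
      rw [Real.mul_rpow hp.le (Real.rpow_nonneg hx.le κ), ← Real.rpow_mul hx.le]
    have h3 : (x ^ (1 - α₁)) ^ ((1 : ℝ) / 2) = x ^ ((1 - α₁) / 2) := by
      rw [← Real.rpow_mul hx.le]; ring_nf
    have h4 : (x ^ (2 - α₁)) ^ (k : ℕ) = x ^ ((2 - α₁) * (k : ℝ)) := by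
      rw [← Real.rpow_natCast (x ^ (2 - α₁)) k, ← Real.rpow_mul hx.le]
    have hexp : (1 - α₁) / 2 + κ * (2 * (k : ℝ) + ν) = (1 - α₁) + (2 - α₁) * (k : ℝ) := by
      rw [hκ, hν]; field_simp; ring
    have h5 : x ^ ((1 - α₁) / 2) * x ^ (κ * (2 * (k : ℝ) + ν))
        = x ^ (1 - α₁) * x ^ ((2 - α₁) * (k : ℝ)) := by
      rw [← Real.rpow_add hx, ← Real.rpow_add hx, hexp]
    rw [e, h2, h3, h4, bA]
    linear_combination ((-1 : ℝ) ^ k / ((k.factorial : ℝ) * Real.Gamma ((k : ℝ) + ν + 1))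
      * (jz / 2) ^ (2 * (k : ℝ) + ν)) * h5
  have hmem : ∀ x : ℝ, x ∈ Set.Ioo (0 : ℝ) 1 → x ^ (2 - α₁) ∈ Set.Ioo (-1 : ℝ) 1 := by
    intro x hx
    constructor
    · have := Real.rpow_pos_of_pos hx.1 (2 - α₁); linarith
    · exact Real.rpow_lt_one hx.1.le hx.2 hγpos
  have hderiv : ∀ x : ℝ, x ∈ Set.Ioo (0 : ℝ) 1 →
      (1 - α₁) * bF ν jz (x ^ (2 - α₁))
        + (2 - α₁) * (x ^ (2 - α₁) * bG ν jz (x ^ (2 - α₁)))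
      = x ^ α₁ * deriv φ x := by
    intro x hx
    have hx0 := hx.1
    have h1 : HasDerivAt (fun y : ℝ => y ^ (1 - α₁)) ((1 - α₁) * x ^ (1 - α₁ - 1)) x :=
      Real.hasDerivAt_rpow_const (Or.inl hx0.ne')
    have h2 : HasDerivAt (fun y : ℝ => y ^ (2 - α₁)) ((2 - α₁) * x ^ (2 - α₁ - 1)) x :=
      Real.hasDerivAt_rpow_const (Or.inl hx0.ne')
    have h3 : HasDerivAt (bF ν jz) (bG ν jz (x ^ (2 - α₁))) (x ^ (2 - α₁)) :=
      bF_hasDerivAt hν0 hjz (hmem x hx)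
    have h4 : HasDerivAt (fun y : ℝ => bF ν jz (y ^ (2 - α₁)))
        (bG ν jz (x ^ (2 - α₁)) * ((2 - α₁) * x ^ (2 - α₁ - 1))) x := (h3.comp x h2 :)
    have h5 : HasDerivAt (fun y : ℝ => y ^ (1 - α₁) * bF ν jz (y ^ (2 - α₁)))
        ((1 - α₁) * x ^ (1 - α₁ - 1) * bF ν jz (x ^ (2 - α₁))
          + x ^ (1 - α₁) * (bG ν jz (x ^ (2 - α₁)) * ((2 - α₁) * x ^ (2 - α₁ - 1)))) x :=
      h1.mul h4
    have heq : φ =ᶠ[nhds x] fun y => y ^ (1 - α₁) * bF ν jz (y ^ (2 - α₁)) := by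
      filter_upwards [isOpen_Ioi.mem_nhds (Set.mem_Ioi.2 hx0)] with y hy
      exact hphi y hy
    have hd : deriv φ x
        = (1 - α₁) * x ^ (1 - α₁ - 1) * bF ν jz (x ^ (2 - α₁))
          + x ^ (1 - α₁) * (bG ν jz (x ^ (2 - α₁)) * ((2 - α₁) * x ^ (2 - α₁ - 1))) :=
      heq.deriv_eq.trans h5.deriv
    rw [hd]
    have e1 : x ^ α₁ * x ^ (1 - α₁ - 1) = 1 := by
      rw [← Real.rpow_add hx0, show α₁ + (1 - α₁ - 1) = 0 by ring, Real.rpow_zero]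
    have e2 : x ^ α₁ * (x ^ (1 - α₁) * x ^ (2 - α₁ - 1)) = x ^ (2 - α₁) := by
      rw [← Real.rpow_add hx0, ← Real.rpow_add hx0,
        show α₁ + (1 - α₁ + (2 - α₁ - 1)) = 2 - α₁ by ring]
    linear_combination (-((1 - α₁) * bF ν jz (x ^ (2 - α₁)))) * e1
      + (-((2 - α₁) * bG ν jz (x ^ (2 - α₁)))) * e2
  -- limits
  have hxγ0 : Tendsto (fun x : ℝ => x ^ (2 - α₁)) (nhdsWithin 0 (Set.Ioi 0)) (nhds 0) := by
    have h := (Real.continuousAt_rpow_const 0 (2 - α₁) (Or.inr hγpos.le)).tendsto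
    rw [Real.zero_rpow hγpos.ne'] at h
    exact h.mono_left nhdsWithin_le_nhds
  have hFcont : ContinuousAt (bF ν jz) 0 :=
    (bF_hasDerivAt hν0 hjz (by norm_num : (0 : ℝ) ∈ Set.Ioo (-1 : ℝ) 1)).continuousAt
  have hT1 : Tendsto (fun x : ℝ => (1 - α₁) * bF ν jz (x ^ (2 - α₁)))
      (nhdsWithin 0 (Set.Ioi 0)) (nhds ((1 - α₁) * bF ν jz 0)) :=
    tendsto_const_nhds.mul (hFcont.tendsto.comp hxγ0)
  have hIoo : Set.Ioo (0 : ℝ) 1 ∈ nhdsWithin (0 : ℝ) (Set.Ioi 0) :=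
    Ioo_mem_nhdsGT_of_mem ⟨le_refl 0, one_pos⟩
  have hT2 : Tendsto (fun x : ℝ => (2 - α₁) * (x ^ (2 - α₁) * bG ν jz (x ^ (2 - α₁))))
      (nhdsWithin 0 (Set.Ioi 0)) (nhds 0) := by
    have inner : Tendsto (fun x : ℝ => x ^ (2 - α₁) * bG ν jz (x ^ (2 - α₁)))
        (nhdsWithin 0 (Set.Ioi 0)) (nhds 0) := by
      apply squeeze_zero_norm' (a := fun x : ℝ => x ^ (2 - α₁) * ∑' k, bU ν jz k)
      · filter_upwards [hIoo] with x hx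
        have h6 := bG_bound hν0 hjz (hmem x hx)
        have hxγnn : 0 ≤ x ^ (2 - α₁) := Real.rpow_nonneg hx.1.le _
        rw [Real.norm_eq_abs, abs_mul, abs_of_nonneg hxγnn]
        exact mul_le_mul_of_nonneg_left h6 hxγnn
      · have := hxγ0.mul_const (∑' k, bU ν jz k)
        rwa [zero_mul] at this
    have h7 := inner.const_mul (2 - α₁)
    rwa [mul_zero] at h7
  have H := hT1.add hT2
  rw [add_zero] at H
  have hfinal : (1 - α₁) * bF ν jz 0 = (1 - α₁) * jz ^ ν / (2 ^ ν * Real.Gamma (ν + 1)) := by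
    rw [bF_zero, Real.div_rpow hjz.le (by norm_num : (0 : ℝ) ≤ 2), div_div]
    ring
  rw [hfinal] at H
  refine Filter.Tendsto.congr' ?_ H
  filter_upwards [hIoo] with x hx
  exact hderiv x hx
end
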